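/- Let P_1, …, P_q ⊆ ℝ^m be (nonempty) polytopes such that each P_i has an extension Q_i ⊆ ℝ^{d_i} of size s_i (i.e., Q_i is a polyhedron with at most s_i facets and there is an affine map p_i : ℝ^{d_i} → ℝ^m with p_i(Q_i) = P_i). Then the polytope P = conv(P_1 ∪ ⋯ ∪ P_q) has an extension of size at most ∑_{i=1}^q (s_i + 1). -/

import Mathlib

/-
Balas' construction. Homogenize the system of each `Q i` with a new variable `λ i`: the equations
become `Aeq y = λ • beq`, the inequalities `A y ≤ λ • b`, and `0 ≤ λ` is added. Impose `∑ λ i = 1`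
on the product of these cones and send `(y, λ)` to `∑ i, ((p i).linear (y i) + λ i • p i 0)`.
A block with `λ i > 0` contributes `λ i • z i` with `z i = p i ((λ i)⁻¹ • y i) ∈ P i`; a block with
`λ i = 0` is a recession direction of `Q i`, which `p i` kills because `P i` is bounded. So the
image is `conv (⋃ i, P i)`, described with `s i + 1` inequalities per block.
-/

theorem AffineMap.linear_eq_zero_of_isBounded_image {V F : Type*} [AddCommGroup V] [Module ℝ V]
    [NormedAddCommGroup F] [NormedSpace ℝ F] (p : V →ᵃ[ℝ] F) {Q : Set V}
    (hQ : Bornology.IsBounded (p '' Q)) {y v : V} (hray : ∀ t : ℝ, 0 ≤ t → y + t • v ∈ Q) :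
    p.linear v = 0 := by
  obtain ⟨C, hC⟩ := isBounded_iff_forall_norm_le.1 hQ
  have hray_image (t : ℝ) (ht : 0 ≤ t) : ‖p y + t • p.linear v‖ ≤ C := by
    have := hC _ (Set.mem_image_of_mem p (hray t ht))
    rwa [add_comm, ← vadd_eq_add, p.map_vadd, vadd_eq_add, map_smul, add_comm] at this
  by_contra hv
  have hpos : 0 < ‖p.linear v‖ := norm_pos_iff.2 hv
  set t := (C + ‖p y‖ + 1) / ‖p.linear v‖
  have hC0 : 0 ≤ C := (norm_nonneg _).trans (hC _ (Set.mem_image_of_mem p (hray 0 le_rfl)))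
  have ht : 0 ≤ t := by positivity
  have htv : ‖t • p.linear v‖ = C + ‖p y‖ + 1 := by
    rw [norm_smul, Real.norm_of_nonneg ht, div_mul_cancel₀ _ hpos.ne']
  have := norm_sub_le (p y + t • p.linear v) (p y)
  rw [add_sub_cancel_left, htv] at this
  linarith [hray_image t ht]

section Polyhedron

variable {V F E I : Type*} [AddCommGroup V] [Module ℝ V]

def polyhedron (ℓ : E → V →ₗ[ℝ] ℝ) (e : E → ℝ) (φ : I → V →ₗ[ℝ] ℝ) (c : I → ℝ) : Set V :=
  {v | (∀ t, ℓ t v = e t) ∧ ∀ t, φ t v ≤ c t}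

variable (ℓ : E → V →ₗ[ℝ] ℝ) (e : E → ℝ) (φ : I → V →ₗ[ℝ] ℝ) (c : I → ℝ)

theorem convex_polyhedron : Convex ℝ (polyhedron ℓ e φ c) := by
  rintro v ⟨hvℓ, hvφ⟩ w ⟨hwℓ, hwφ⟩ a b ha hb hab
  refine ⟨fun t => ?_, fun t => ?_⟩
  · simp only [map_add, map_smul, smul_eq_mul, hvℓ, hwℓ]
    rw [← add_mul, hab, one_mul]
  · simp only [map_add, map_smul, smul_eq_mul]
    calc a * φ t v + b * φ t w ≤ a * c t + b * c t := by gcongr <;> simp [hvφ, hwφ]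
      _ = c t := by rw [← add_mul, hab, one_mul]

def homogenizedEq : E → V × ℝ →ₗ[ℝ] ℝ :=
  fun t => ℓ t ∘ₗ LinearMap.fst ℝ V ℝ - e t • LinearMap.snd ℝ V ℝ

def homogenizedIneq : I ⊕ Unit → V × ℝ →ₗ[ℝ] ℝ :=
  Sum.elim (fun t => φ t ∘ₗ LinearMap.fst ℝ V ℝ - c t • LinearMap.snd ℝ V ℝ)
    fun _ => -LinearMap.snd ℝ V ℝ

def homogenization : Set (V × ℝ) :=
  polyhedron (homogenizedEq ℓ e) 0 (homogenizedIneq φ c) 0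

theorem mem_homogenization_iff {w : V × ℝ} :
    w ∈ homogenization ℓ e φ c ↔
      (∀ t, ℓ t w.1 = w.2 * e t) ∧ (∀ t, φ t w.1 ≤ w.2 * c t) ∧ 0 ≤ w.2 := by
  simp [homogenization, homogenizedEq, homogenizedIneq, polyhedron, Sum.forall, sub_eq_zero,
    mul_comm]

variable {ℓ e φ c}

theorem inv_smul_mem_polyhedron {v : V} {r : ℝ} (hv : (v, r) ∈ homogenization ℓ e φ c)
    (hr : 0 < r) : r⁻¹ • v ∈ polyhedron ℓ e φ c := by
  rw [mem_homogenization_iff] at hv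
  refine ⟨fun t => ?_, fun t => ?_⟩
  · rw [map_smul, hv.1, smul_eq_mul, inv_mul_cancel_left₀ hr.ne']
  · rw [map_smul, smul_eq_mul, ← inv_mul_cancel_left₀ hr.ne' (c t)]
    exact mul_le_mul_of_nonneg_left (hv.2.1 t) (inv_nonneg.2 hr.le)

theorem add_smul_mem_polyhedron {v y : V} (hv : (v, 0) ∈ homogenization ℓ e φ c)
    (hy : y ∈ polyhedron ℓ e φ c) {t : ℝ} (ht : 0 ≤ t) : y + t • v ∈ polyhedron ℓ e φ c := by
  rw [mem_homogenization_iff] at hv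
  refine ⟨fun k => ?_, fun k => ?_⟩
  · simp [hy.1 k, hv.1 k]
  · have hvk : φ k v ≤ 0 := by simpa using hv.2.1 k
    simp only [map_add, map_smul, smul_eq_mul]
    nlinarith [hy.2 k]

def homogenizedMap [AddCommGroup F] [Module ℝ F] (p : V →ᵃ[ℝ] F) : V × ℝ →ₗ[ℝ] F :=
  p.linear.coprod (LinearMap.toSpanSingleton ℝ F (p 0))

theorem homogenizedMap_smul_one [AddCommGroup F] [Module ℝ F] (p : V →ᵃ[ℝ] F) (v : V) (r : ℝ) :
    homogenizedMap p (r • (v, 1)) = r • p v := by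
  rw [map_smul]
  congr 1
  simpa [homogenizedMap] using (congrFun p.decomp v).symm

theorem exists_mem_image_homogenizedMap_eq_smul [NormedAddCommGroup F] [NormedSpace ℝ F]
    {ℓ : E → V →ₗ[ℝ] ℝ} {e : E → ℝ} {φ : I → V →ₗ[ℝ] ℝ} {c : I → ℝ} (p : V →ᵃ[ℝ] F)
    (hne : (polyhedron ℓ e φ c).Nonempty) (hbdd : Bornology.IsBounded (p '' polyhedron ℓ e φ c))
    {w : V × ℝ} (hw : w ∈ homogenization ℓ e φ c) :
    ∃ z ∈ p '' polyhedron ℓ e φ c, homogenizedMap p w = w.2 • z := by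
  obtain ⟨v, r⟩ := w
  obtain hr | hr := ((mem_homogenization_iff ℓ e φ c).1 hw).2.2.eq_or_lt
  · -- `(v, 0)` is a recession direction of the bounded polyhedron, so `p` kills it
    subst hr
    obtain ⟨y, hy⟩ := hne
    refine ⟨p y, Set.mem_image_of_mem p hy, ?_⟩
    have := p.linear_eq_zero_of_isBounded_image hbdd fun t ht => add_smul_mem_polyhedron hw hy ht
    simp [homogenizedMap, this]
  · refine ⟨p (r⁻¹ • v), Set.mem_image_of_mem p (inv_smul_mem_polyhedron hw hr), ?_⟩
    rw [← homogenizedMap_smul_one, Prod.smul_mk, smul_inv_smul₀ hr.ne', smul_eq_mul, mul_one]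

end Polyhedron

section Balas

variable {ι F : Type*} [Fintype ι] {V E I : ι → Type*} [∀ i, AddCommGroup (V i)]
  [∀ i, Module ℝ (V i)]
  (ℓ : ∀ i, E i → V i →ₗ[ℝ] ℝ) (e : ∀ i, E i → ℝ) (φ : ∀ i, I i → V i →ₗ[ℝ] ℝ) (c : ∀ i, I i → ℝ)

def balasSet : Set (∀ i, V i × ℝ) :=
  polyhedron
    (Sum.elim (fun k : Σ i, E i => homogenizedEq (ℓ k.1) (e k.1) k.2 ∘ₗ LinearMap.proj k.1)
      fun _ : Unit => ∑ i, LinearMap.snd ℝ (V i) ℝ ∘ₗ LinearMap.proj i)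
    (Sum.elim 0 1)
    (fun k : Σ i, I i ⊕ Unit => homogenizedIneq (φ k.1) (c k.1) k.2 ∘ₗ LinearMap.proj k.1) 0

theorem mem_balasSet_iff {w : ∀ i, V i × ℝ} :
    w ∈ balasSet ℓ e φ c ↔
      (∀ i, w i ∈ homogenization (ℓ i) (e i) (φ i) (c i)) ∧ ∑ i, (w i).2 = 1 := by
  simp only [balasSet, polyhedron, Sum.forall, Sum.elim_inl, LinearMap.coe_comp,
    LinearMap.coe_proj, Function.comp_apply, Function.eval, Pi.zero_apply, Sigma.forall,
    Sum.elim_inr, LinearMap.coe_sum, LinearMap.coe_snd, Finset.sum_apply, Pi.one_apply,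
    forall_const, forall_and, Set.mem_ofPred_eq, homogenization]
  tauto

def balasMap [AddCommGroup F] [Module ℝ F] (p : ∀ i, V i →ᵃ[ℝ] F) : (∀ i, V i × ℝ) →ₗ[ℝ] F :=
  ∑ i, homogenizedMap (p i) ∘ₗ LinearMap.proj i

theorem balasMap_image_balasSet [NormedAddCommGroup F] [NormedSpace ℝ F] (p : ∀ i, V i →ᵃ[ℝ] F)
    (hne : ∀ i, (polyhedron (ℓ i) (e i) (φ i) (c i)).Nonempty)
    (hbdd : ∀ i, Bornology.IsBounded (p i '' polyhedron (ℓ i) (e i) (φ i) (c i))) :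
    balasMap p '' balasSet ℓ e φ c =
      convexHull ℝ (⋃ i, p i '' polyhedron (ℓ i) (e i) (φ i) (c i)) := by
  classical
  apply subset_antisymm
  · rintro _ ⟨w, hw, rfl⟩
    rw [mem_balasSet_iff] at hw
    choose z hz hwz using fun i =>
      exists_mem_image_homogenizedMap_eq_smul (p i) (hne i) (hbdd i) (hw.1 i)
    have hmap : balasMap p w = ∑ i, (w i).2 • z i := by simp [balasMap, hwz]
    rw [hmap]
    exact (convex_convexHull ℝ _).sum_mem
      (fun i _ => ((mem_homogenization_iff _ _ _ _).1 (hw.1 i)).2.2) hw.2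
      fun i _ => subset_convexHull ℝ _ (Set.mem_iUnion_of_mem i (hz i))
  · refine convexHull_min (Set.iUnion_subset fun i => ?_)
      ((convex_polyhedron _ _ _ _).linear_image (balasMap p))
    rintro _ ⟨y, hy, rfl⟩
    refine ⟨Pi.single i (y, 1), (mem_balasSet_iff _ _ _ _).2 ⟨fun j => ?_, ?_⟩, ?_⟩
    · rcases eq_or_ne j i with rfl | hj
      · simpa [mem_homogenization_iff, polyhedron] using hy
      · simp [Pi.single_eq_of_ne hj, mem_homogenization_iff]
    · simp [Pi.apply_single (fun j => @Prod.snd (V j) ℝ) (fun _ => Prod.snd_zero)]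
    · simp [balasMap, Pi.apply_single (fun j => homogenizedMap (p j)) (fun _ => map_zero _)]
      simpa using homogenizedMap_smul_one (p i) y 1

end Balas

section Coordinates

variable {F : Type*} [AddCommGroup F] [Module ℝ F]

def HasExtensionOfSize (S : Set F) (f : ℕ) : Prop :=
  ∃ (d g : ℕ) (Aeq : Fin g → Fin d → ℝ) (beq : Fin g → ℝ) (A : Fin f → Fin d → ℝ) (b : Fin f → ℝ)
    (p : (Fin d → ℝ) →ᵃ[ℝ] F),
    p '' {y : Fin d → ℝ | (∀ t : Fin g, ∑ j, Aeq t j * y j = beq t) ∧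
      (∀ t : Fin f, ∑ j, A t j * y j ≤ b t)} = S

theorem polyhedron_sum_smul_proj {κ E I : Type*} [Fintype κ] (Aeq : E → κ → ℝ) (beq : E → ℝ)
    (A : I → κ → ℝ) (b : I → ℝ) :
    polyhedron (fun t => ∑ j, Aeq t j • LinearMap.proj j) beq
        (fun t => ∑ j, A t j • LinearMap.proj j) b =
      {y : κ → ℝ | (∀ t, ∑ j, Aeq t j * y j = beq t) ∧ ∀ t, ∑ j, A t j * y j ≤ b t} := by
  simp [polyhedron]

theorem hasExtensionOfSize_image_polyhedron {V E I : Type*} [AddCommGroup V] [Module ℝ V]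
    [FiniteDimensional ℝ V] [Fintype E] [Fintype I] (p : V →ᵃ[ℝ] F) (ℓ : E → V →ₗ[ℝ] ℝ)
    (e : E → ℝ) (φ : I → V →ₗ[ℝ] ℝ) (c : I → ℝ) :
    HasExtensionOfSize (p '' polyhedron ℓ e φ c) (Fintype.card I) := by
  set B := Module.finBasis ℝ V
  set eE := Fintype.equivFin E
  set eI := Fintype.equivFin I
  have hcoord (ψ : V →ₗ[ℝ] ℝ) (v : V) : ∑ j, ψ (B j) * B.equivFun v j = ψ v := by
    conv_rhs => rw [← B.sum_equivFun v, map_sum]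
    simp only [map_smul, smul_eq_mul, mul_comm]
  refine ⟨_, _, fun t j => ℓ (eE.symm t) (B j), fun t => e (eE.symm t),
    fun t j => φ (eI.symm t) (B j), fun t => c (eI.symm t),
    p.comp B.equivFun.symm.toLinearMap.toAffineMap, ?_⟩
  rw [AffineMap.coe_comp, Set.image_comp]
  congr 1
  change (B.equivFun.symm : (Fin _ → ℝ) → V) '' _ = _
  rw [LinearEquiv.image_symm_eq_preimage]
  ext v
  simp only [Set.mem_preimage, Set.mem_ofPred_eq, hcoord, polyhedron]
  exact and_congr (eE.symm.forall_congr_right (q := fun t => ℓ t v = e t))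
    (eI.symm.forall_congr_right (q := fun t => φ t v ≤ c t))

end Coordinates

/-- Balas; Lemma 4.4.  If the nonempty polytopes `P_1, …, P_q ⊆ ℝ^m`
have extensions `Q_i ⊆ ℝ^{d_i}` of size `s_i` (here: `Q_i` is described by linear
equations together with `s_i` linear inequalities, which is possible whenever `Q_i` is
a polyhedron with at most `s_i` facets), then `conv(P_1 ∪ ⋯ ∪ P_q)` has an extension
of size at most `∑ (s_i + 1)`. -/
theorem statement14 (m q : ℕ) (P : Fin q → Set (Fin m → ℝ))
    (hpoly : ∀ i, ∃ X : Finset (Fin m → ℝ),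
      X.Nonempty ∧ P i = convexHull ℝ (X : Set (Fin m → ℝ)))
    (s : Fin q → ℕ)
    (hext : ∀ i, ∃ (d g : ℕ) (Aeq : Fin g → Fin d → ℝ) (beq : Fin g → ℝ)
        (A : Fin (s i) → Fin d → ℝ) (b : Fin (s i) → ℝ)
        (p : (Fin d → ℝ) →ᵃ[ℝ] (Fin m → ℝ)),
      p '' {y : Fin d → ℝ |
          (∀ t : Fin g, ∑ j, Aeq t j * y j = beq t) ∧
          (∀ t : Fin (s i), ∑ j, A t j * y j ≤ b t)} = P i) :
    ∃ (d g f : ℕ) (Aeq : Fin g → Fin d → ℝ) (beq : Fin g → ℝ)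
      (A : Fin f → Fin d → ℝ) (b : Fin f → ℝ)
      (p : (Fin d → ℝ) →ᵃ[ℝ] (Fin m → ℝ)),
      f ≤ ∑ i, (s i + 1) ∧
      p '' {y : Fin d → ℝ |
          (∀ t : Fin g, ∑ j, Aeq t j * y j = beq t) ∧
          (∀ t : Fin f, ∑ j, A t j * y j ≤ b t)} = convexHull ℝ (⋃ i, P i) := by
  choose d g Aeq beq A b p hp using hext
  simp_rw [← polyhedron_sum_smul_proj] at hp
  have hne (i : Fin q) : (P i).Nonempty := by
    obtain ⟨X, hX, hPX⟩ := hpoly i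
    exact hPX ▸ (Finset.coe_nonempty.2 hX).mono (subset_convexHull ℝ _)
  have hbdd (i : Fin q) : Bornology.IsBounded (P i) := by
    obtain ⟨X, -, hPX⟩ := hpoly i
    exact hPX ▸ isBounded_convexHull.2 X.finite_toSet.isBounded
  have hcard : Fintype.card (Σ i, Fin (s i) ⊕ Unit) = ∑ i, (s i + 1) := by simp
  have hbalas : HasExtensionOfSize (convexHull ℝ (⋃ i, P i)) (∑ i, (s i + 1)) := by
    rw [← hcard, ← Set.iUnion_congr hp, ← balasMap_image_balasSet _ _ _ _ p
      (fun i => (hp i ▸ hne i).of_image) (fun i => hp i ▸ hbdd i)]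
    exact hasExtensionOfSize_image_polyhedron (balasMap p).toAffineMap ..
  obtain ⟨d', g', Aeq', beq', A', b', p', himage⟩ := hbalas
  exact ⟨d', g', _, Aeq', beq', A', b', p', le_rfl, himage⟩
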